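/- arXiv:2011.11755 — 7 statements merged into one kernel-verified Lean document; each statement's English description precedes it below -/
import Mathlib

section
/- For every natural number r and every category C with finite coproducts and object X, the stabilization homomorphism Aut(T_r) → Aut(T_{r+1}), sending an automorphism u of T_r to the automorphism of T_{r+1} obtained by transporting u ⊔ 𝟙_X along the canonical isomorphism T_r ⊔ T_1 ≅ T_{r+1}, is an injective group homomorphism. (This is the paper's proposition that for every Lawvere theory T the stabilization maps Aut(T_r) → Aut(T_{r+1}) are injective.) -/
open CategoryTheory CategoryTheory.Limits

universe u v

variable {C : Type u} [Category.{v} C]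

/-- `T X r` is the coproduct of `r` copies of `X`, indexed by `Fin r`;
it models the free model of rank `r` of a Lawvere theory with `X = T_1`. -/
noncomputable def T [HasFiniteCoproducts C] (X : C) (r : ℕ) : C :=
  ∐ (fun _ : Fin r => X)

/-- The canonical isomorphism `T_r ⊔ T_1 ≅ T_{r+1}`. -/
noncomputable def stabIso [HasFiniteCoproducts C] (X : C) (r : ℕ) :
    T X r ⨿ X ≅ T X (r + 1) :=
  (coprod.braiding (T X r) X).trans <|
    IsColimit.coconePointUniqueUpToIso
      (extendCofanIsColimit (fun _ : Fin (r + 1) => X)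
        (coproductIsCoproduct (fun _ : Fin r => X))
        (coprodIsCoprod X (T X r)))
      (coproductIsCoproduct (fun _ : Fin (r + 1) => X))

/-- The stabilization homomorphism `Aut (T_r) →* Aut (T_{r+1})`, sending an
automorphism `u` of `T_r` to the automorphism of `T_{r+1}` obtained by
transporting `u ⊔ 𝟙_X` along the canonical isomorphism `T_r ⊔ T_1 ≅ T_{r+1}`. -/
noncomputable def stabHom [HasFiniteCoproducts C] (X : C) (r : ℕ) :
    Aut (T X r) →* Aut (T X (r + 1)) :=
  ((stabIso X r).conjAut.toMonoidHom).comp ((coprod.functor.flip.obj X).mapAut (X := T X r))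

/- `u` is recovered from `u ⊔ 𝟙_X` by restricting along `T_r ⟶ T_r ⊔ X`, and this inclusion
is split mono as soon as `X` maps to `T_r`, i.e. for `r > 0`; for `r = 0` the object `T_0` is
initial and has only the trivial automorphism. -/

lemma isSplitMono_coprod_inl_of_hom {V Z : C} [HasBinaryCoproduct V Z] (h : Z ⟶ V) :
    IsSplitMono (coprod.inl : V ⟶ V ⨿ Z) :=
  IsSplitMono.mk' ⟨coprod.desc (𝟙 V) h, coprod.inl_desc _ _⟩

lemma eq_of_coprod_map_id_eq {W V Z : C} [HasBinaryCoproduct W Z] [HasBinaryCoproduct V Z]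
    (h : Z ⟶ V) {f g : W ⟶ V} (hfg : coprod.map f (𝟙 Z) = coprod.map g (𝟙 Z)) : f = g := by
  have := isSplitMono_coprod_inl_of_hom h
  rw [← cancel_mono (coprod.inl : V ⟶ V ⨿ Z), ← coprod.inl_map f (𝟙 Z), hfg, coprod.inl_map]

lemma T_zero_hom_ext [HasFiniteCoproducts C] (X : C) {Y : C} (f g : T X 0 ⟶ Y) : f = g :=
  Sigma.hom_ext _ _ (fun i => i.elim0)

/-- For every Lawvere theory `T`, the stabilization maps
`Aut (T_r) → Aut (T_{r+1})` are injective. -/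
theorem stabHom_injective [HasFiniteCoproducts C] (X : C) (r : ℕ) :
    Function.Injective (stabHom X r) := by
  intro u v huv
  have hmap : coprod.map u.hom (𝟙 X) = coprod.map v.hom (𝟙 X) :=
    congrArg Iso.hom ((stabIso X r).conjAut.injective huv)
  ext
  cases r with
  | zero => exact T_zero_hom_ext X _ _
  | succ n => exact eq_of_coprod_map_id_eq (Sigma.ι (fun _ : Fin (n + 1) => X) 0) hmap
end

section
/- Let C be a category with binary coproducts, X an object of C, and u, v automorphisms of X. Then in the automorphism group of (X ⊔ X) ⊔ X one has the identity (⁅u,v⁆ ⊔ 𝟙_X) ⊔ 𝟙_X = ⁅(u ⊔ u⁻¹) ⊔ 𝟙_X, (v ⊔ 𝟙_X) ⊔ v⁻¹⁆, where ⁅a,b⁆ denotes the group commutator. (This is the identity [u,v] + id_{T_{2r}} = [u + u⁻¹ + id, v + id + v⁻¹] used in the proof that the commutator subgroup of the stable automorphism group is perfect.) -/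
open CategoryTheory CategoryTheory.Limits
open scoped commutatorElement

universe u v

variable {C : Type u} [Category.{v} C]

/-- The coproduct `u ⊔ v` of two automorphisms, as an automorphism of the
coproduct: applied to automorphisms, `coprod.map` defines the map
`Aut X × Aut Y → Aut (X ⊔ Y)`. -/
noncomputable def coprodAut [HasBinaryCoproducts C] {X Y : C}
    (u : Aut X) (v : Aut Y) : Aut (X ⨿ Y) :=
  coprod.mapIso u v

section CoprodAut

variable [HasBinaryCoproducts C] {X Y : C}

theorem coprodAut_mul (a c : Aut X) (b d : Aut Y) :
    coprodAut a b * coprodAut c d = coprodAut (a * c) (b * d) :=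
  Iso.ext (coprod.map_map c.hom d.hom a.hom b.hom)

theorem coprodAut_one : coprodAut (1 : Aut X) (1 : Aut Y) = 1 :=
  Iso.ext coprod.map_id_id

noncomputable def coprodAutHom : Aut X × Aut Y →* Aut (X ⨿ Y) where
  toFun p := coprodAut p.1 p.2
  map_one' := coprodAut_one
  map_mul' p q := (coprodAut_mul p.1 q.1 p.2 q.2).symm

theorem coprodAut_commutatorElement (a c : Aut X) (b d : Aut Y) :
    coprodAut ⁅a, c⁆ ⁅b, d⁆ = ⁅coprodAut a b, coprodAut c d⁆ :=
  map_commutatorElement (coprodAutHom (X := X) (Y := Y)) (a, b) (c, d)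

end CoprodAut

/-- In the automorphism group of `(X ⊔ X) ⊔ X` one has the identity
`(⁅u,v⁆ ⊔ 𝟙_X) ⊔ 𝟙_X = ⁅(u ⊔ u⁻¹) ⊔ 𝟙_X, (v ⊔ 𝟙_X) ⊔ v⁻¹⁆`. -/
theorem coprod_commutator_identity [HasBinaryCoproducts C] (X : C) (u v : Aut X) :
    coprodAut (coprodAut ⁅u, v⁆ (1 : Aut X)) (1 : Aut X) =
      ⁅coprodAut (coprodAut u u⁻¹) (1 : Aut X),
        coprodAut (coprodAut v (1 : Aut X)) v⁻¹⁆ := by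
  -- commutators are taken componentwise, and `⁅u⁻¹, 1⁆ = ⁅1, v⁻¹⁆ = 1`
  rw [← coprodAut_commutatorElement, ← coprodAut_commutatorElement,
    commutatorElement_one_right, commutatorElement_one_left]
end

section
/- Let C be a category with finite coproducts and X an object of C. Let F : ℕ ⥤ Grp be the functor sending r to the automorphism group Aut(T_r) and whose transition maps are the stabilization homomorphisms, and let G be the colimit of F in the category of groups. Then the commutator subgroup ⁅G,G⁆ of G is perfect, i.e. ⁅⁅G,G⁆,⁅G,G⁆⁆ = ⁅G,G⁆. (This is the paper's proposition that for every Lawvere theory T the commutator subgroup of the stable automorphism group colim_r Aut(T_r) is perfect.) -/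
open CategoryTheory CategoryTheory.Limits

universe u v

variable {C : Type u} [Category.{v} C]

/-- The functor `ℕ ⥤ Grp` sending `r` to `Aut (T_r)`, whose transition maps are
the stabilization homomorphisms. -/
noncomputable def autFunctor [HasFiniteCoproducts C] (X : C) : ℕ ⥤ GrpCat.{v} :=
  Functor.ofSequence (fun r => GrpCat.ofHom (stabHom X r))

/-!
Two elements of the colimit `G` come from a common stage `Aut A`, `A = T_{n+1}`, and iterated
stabilization lets the map `Aut A → G` factor as `u ↦ u ⊔ 𝟙 ⊔ 𝟙` followed by a homomorphism
`Aut (A ⊔ A ⊔ A) → G`.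
In `Aut (A ⊔ A ⊔ A)`, permuting the blocks moves `x = a ⊔ 𝟙 ⊔ 𝟙` and `y = b ⊔ 𝟙 ⊔ 𝟙` to the second and third
block, where they commute with everything living on the other blocks; this forces
`⁅x, y⁆ = ⁅⁅x, s⁆, ⁅y, t⁆⁆` for suitable block permutations `s`, `t`. So every commutator of `G`
is a commutator of commutators.
-/

open scoped commutatorElement

section Group

variable {G : Type*} [Group G]

theorem commutatorElement_eq_of_commute_conj {x y s t : G}
    (hy : Commute (s * x * s⁻¹) y) (hst : Commute (s * x * s⁻¹) (t * y * t⁻¹))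
    (hx : Commute x (t * y * t⁻¹)) :
    ⁅x, y⁆ = ⁅⁅x, s⁆, ⁅y, t⁆⁆ := by
  set p := s * x * s⁻¹
  set q := t * y * t⁻¹
  have hxs : ⁅x, s⁆ = x * p⁻¹ := by simp only [p, commutatorElement_def]; group
  have hyt : ⁅y, t⁆ = y * q⁻¹ := by simp only [q, commutatorElement_def]; group
  rw [hxs, hyt]
  calc ⁅x, y⁆ = x * y * (q⁻¹ * x⁻¹ * q) * y⁻¹ := by
        rw [hx.symm.inv_right.inv_mul_cancel, commutatorElement_def]
    _ = x * (p⁻¹ * (y * q⁻¹) * p) * x⁻¹ * q * y⁻¹ := by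
        rw [(hy.mul_right hst.inv_right).inv_mul_cancel]; group
    _ = ⁅x * p⁻¹, y * q⁻¹⁆ := by simp only [commutatorElement_def]; group

theorem commutator_commutator_eq_of_forall_commutatorElement_eq
    (h : ∀ x y : G, ∃ s t : G, ⁅x, y⁆ = ⁅⁅x, s⁆, ⁅y, t⁆⁆) :
    ⁅commutator G, commutator G⁆ = commutator G := by
  refine le_antisymm (Subgroup.commutator_le_self _) ?_
  calc commutator G = ⁅(⊤ : Subgroup G), ⊤⁆ := commutator_def G
    _ ≤ ⁅commutator G, commutator G⁆ := Subgroup.commutator_le.mpr fun x _ y _ => by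
        obtain ⟨s, t, hst⟩ := h x y
        rw [hst]
        exact Subgroup.commutator_mem_commutator
          (Subgroup.commutator_mem_commutator (Subgroup.mem_top x) (Subgroup.mem_top s))
          (Subgroup.commutator_mem_commutator (Subgroup.mem_top y) (Subgroup.mem_top t))

end Group

@[simp]
theorem CategoryTheory.Aut.one_hom (A : C) : (1 : Aut A).hom = 𝟙 A :=
  rfl

@[simp]
theorem CategoryTheory.Aut.mul_hom {A : C} (f g : Aut A) : (f * g).hom = g.hom ≫ f.hom :=
  rfl

theorem CategoryTheory.Iso.refl_conjAut {A : C} (u : Aut A) : (Iso.refl A).conjAut u = u := by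
  ext; simp [Iso.conjAut_hom, Iso.conj_apply]

section Coproduct

variable [HasBinaryCoproducts C]

namespace CategoryTheory.Limits.coprod

noncomputable def mapAut {A B : C} : Aut A × Aut B →* Aut (A ⨿ B) where
  toFun p :=
    { hom := coprod.map p.1.hom p.2.hom
      inv := coprod.map p.1.inv p.2.inv
      hom_inv_id := by rw [map_map, Iso.hom_inv_id p.1, Iso.hom_inv_id p.2, map_id_id]
      inv_hom_id := by rw [map_map, Iso.inv_hom_id p.1, Iso.inv_hom_id p.2, map_id_id] }
  map_one' := Aut.ext map_id_id
  map_mul' p q := Aut.ext (map_map _ _ _ _).symm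

@[simp]
theorem mapAut_hom {A B : C} (p : Aut A × Aut B) :
    (mapAut p).hom = coprod.map p.1.hom p.2.hom :=
  rfl

theorem mapIso_conjAut_mapAut {A B A' B' : C} (e₁ : A ≅ A') (e₂ : B ≅ B') (u : Aut A)
    (v : Aut B) :
    (coprod.mapIso e₁ e₂).conjAut (mapAut (u, v)) = mapAut (e₁.conjAut u, e₂.conjAut v) := by
  ext : 1; simp [Iso.conjAut_hom, Iso.conj_apply]

theorem associator_symm_conjAut_mapAut {A B D : C} (u : Aut A) :
    (coprod.associator A B D).symm.conjAut (mapAut (u, 1))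
      = mapAut (mapAut (u, 1), (1 : Aut D)) := by
  ext : 1
  simp only [Iso.conjAut_hom, Iso.conj_apply, Iso.symm_hom, Iso.symm_inv, mapAut_hom,
    Aut.one_hom]
  rw [← Category.assoc, Iso.comp_inv_eq, ← map_id_id]
  exact (coprod.associator_naturality u.hom (𝟙 B) (𝟙 D)).symm

theorem commute_mapAut_one_left_right {A B : C} (u : Aut A) (v : Aut B) :
    Commute (mapAut (u, 1)) (mapAut (1, v)) :=
  (Commute.prod (Commute.one_right u) (Commute.one_left v)).map mapAut

theorem commute_mapAut_one_left {A B : C} {v w : Aut B} (h : Commute v w) :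
    Commute (mapAut ((1 : Aut A), v)) (mapAut (1, w)) :=
  (Commute.prod (Commute.one_left 1) h).map mapAut

end CategoryTheory.Limits.coprod

variable (A : C)

noncomputable def block₁ (u : Aut A) : Aut (A ⨿ (A ⨿ A)) :=
  coprod.mapAut (u, 1)

noncomputable def block₂ (u : Aut A) : Aut (A ⨿ (A ⨿ A)) :=
  coprod.mapAut (1, coprod.mapAut (u, 1))

noncomputable def block₃ (u : Aut A) : Aut (A ⨿ (A ⨿ A)) :=
  coprod.mapAut (1, coprod.mapAut (1, u))

noncomputable def swap₁₂ : Aut (A ⨿ (A ⨿ A)) :=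
  (coprod.associator A A A).symm ≪≫ coprod.mapIso (coprod.braiding A A) (Iso.refl A)
    ≪≫ coprod.associator A A A

noncomputable def swap₂₃ : Aut (A ⨿ (A ⨿ A)) :=
  coprod.mapIso (Iso.refl A) (coprod.braiding A A)

variable {A}

theorem swap₁₂_mul_block₁ (u : Aut A) : swap₁₂ A * block₁ A u = block₂ A u * swap₁₂ A := by
  ext : 1
  simp only [Aut.mul_hom]
  ext <;> simp [swap₁₂, block₁, block₂] <;>
    simp only [coprod.inl_desc, coprod.inr_desc]

theorem swap₂₃_mul_block₂ (u : Aut A) : swap₂₃ A * block₂ A u = block₃ A u * swap₂₃ A := by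
  ext : 1
  simp only [Aut.mul_hom]
  ext <;> simp [swap₂₃, block₂, block₃]

theorem commutatorElement_block₁ (a b : Aut A) :
    ⁅block₁ A a, block₁ A b⁆
      = ⁅⁅block₁ A a, swap₁₂ A⁆, ⁅block₁ A b, swap₂₃ A * swap₁₂ A⁆⁆ := by
  have h₂ : swap₁₂ A * block₁ A a * (swap₁₂ A)⁻¹ = block₂ A a :=
    mul_inv_eq_of_eq_mul (swap₁₂_mul_block₁ a)
  have h₃ : swap₂₃ A * swap₁₂ A * block₁ A b * (swap₂₃ A * swap₁₂ A)⁻¹ = block₃ A b := by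
    rw [mul_inv_rev, ← mul_inv_eq_of_eq_mul (swap₂₃_mul_block₂ b),
      ← mul_inv_eq_of_eq_mul (swap₁₂_mul_block₁ b)]
    group
  apply commutatorElement_eq_of_commute_conj
  · rw [h₂]; exact (coprod.commute_mapAut_one_left_right b _).symm
  · rw [h₂, h₃]; exact coprod.commute_mapAut_one_left (coprod.commute_mapAut_one_left_right a b)
  · rw [h₃]; exact coprod.commute_mapAut_one_left_right a _

end Coproduct

section Colimit

theorem ι_app_map_of_le {F : ℕ ⥤ GrpCat.{v}} (c : Cocone F) {r s : ℕ} (h : r ≤ s) (u : F.obj r) :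
    c.ι.app s (F.map (homOfLE h) u) = c.ι.app r u :=
  ConcreteCategory.congr_hom (c.w (homOfLE h)) u

theorem exists_ι_app_eq_pair {F : ℕ ⥤ GrpCat.{v}} {c : Cocone F} (hc : IsColimit c)
    (g h : c.pt) : ∃ (n : ℕ) (a b : F.obj n), c.ι.app n a = g ∧ c.ι.app n b = h := by
  have := preservesSmallestFilteredColimits_of_preservesFilteredColimits (forget GrpCat.{v})
  obtain ⟨r, a, rfl⟩ := Concrete.isColimit_exists_rep F hc g
  obtain ⟨s, b, rfl⟩ := Concrete.isColimit_exists_rep F hc h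
  exact ⟨max r s, _, _, ι_app_map_of_le c (le_max_left r s) a,
    ι_app_map_of_le c (le_max_right r s) b⟩

variable [HasFiniteCoproducts C] (X : C)

noncomputable def T.oneIso : T X 1 ≅ X :=
  coproductUniqueIso _

/-- Assembled from `stabIso` so that conjugating `u ⊔ 𝟙` by it is an iterate of `stabHom`. -/
noncomputable def blockIso : ∀ r k : ℕ, T X r ⨿ T X (k + 1) ≅ T X (r + (k + 1))
  | r, 0 => coprod.mapIso (Iso.refl _) (T.oneIso X) ≪≫ stabIso X r
  | r, k + 1 =>
      coprod.mapIso (Iso.refl _) (stabIso X (k + 1)).symm ≪≫ (coprod.associator _ _ _).symm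
        ≪≫ coprod.mapIso (blockIso r k) (Iso.refl X) ≪≫ stabIso X (r + (k + 1))

theorem stabHom_apply (r : ℕ) (u : Aut (T X r)) :
    stabHom X r u = (stabIso X r).conjAut (coprod.mapAut (u, 1)) := by
  ext; rfl

theorem blockIso_zero_conjAut (r : ℕ) (u : Aut (T X r)) :
    (blockIso X r 0).conjAut (coprod.mapAut (u, 1)) = stabHom X r u := by
  rw [blockIso, Iso.trans_conjAut, coprod.mapIso_conjAut_mapAut, Iso.refl_conjAut, map_one,
    stabHom_apply]

theorem blockIso_succ_conjAut (r k : ℕ) (u : Aut (T X r)) :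
    (blockIso X r (k + 1)).conjAut (coprod.mapAut (u, 1))
      = stabHom X (r + (k + 1)) ((blockIso X r k).conjAut (coprod.mapAut (u, 1))) := by
  rw [blockIso, Iso.trans_conjAut, Iso.trans_conjAut, Iso.trans_conjAut,
    coprod.mapIso_conjAut_mapAut, Iso.refl_conjAut, map_one, coprod.associator_symm_conjAut_mapAut,
    coprod.mapIso_conjAut_mapAut, map_one, stabHom_apply]

variable (c : Cocone (autFunctor X))

theorem ι_app_succ_stabHom (r : ℕ) (u : Aut (T X r)) :
    c.ι.app (r + 1) (stabHom X r u) = c.ι.app r u := by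
  have h := ι_app_map_of_le c (Nat.le_succ r) u
  simp only [autFunctor, Functor.ofSequence_map_homOfLE_succ] at h
  exact h

theorem ι_app_blockIso_conjAut (r k : ℕ) (u : Aut (T X r)) :
    c.ι.app (r + (k + 1)) ((blockIso X r k).conjAut (coprod.mapAut (u, 1)))
      = c.ι.app r u := by
  induction k with
  | zero => rw [blockIso_zero_conjAut, ι_app_succ_stabHom]
  | succ k ih => rw [blockIso_succ_conjAut]; exact (ι_app_succ_stabHom X c _ _).trans ih

theorem exists_monoidHom_apply_block₁_eq (n : ℕ) :
    ∃ j : Aut (T X (n + 1) ⨿ (T X (n + 1) ⨿ T X (n + 1))) →* c.pt,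
      ∀ v, j (block₁ _ v) = c.ι.app (n + 1) v := by
  let E := coprod.mapIso (Iso.refl _) (blockIso X (n + 1) n) ≪≫ blockIso X (n + 1) (n + 1 + n)
  refine ⟨(c.ι.app _).hom.comp E.conjAut.toMonoidHom, fun v => ?_⟩
  rw [← ι_app_blockIso_conjAut X c (n + 1) (n + 1 + n) v]
  show c.ι.app _ (E.conjAut (block₁ _ v)) = _
  rw [block₁, Iso.trans_conjAut, coprod.mapIso_conjAut_mapAut, Iso.refl_conjAut, map_one]

end Colimit

/-- For every Lawvere theory `T`, the commutator subgroup of the stable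
automorphism group `G = colim_r Aut (T_r)` (the colimit in the category of
groups of the functor `r ↦ Aut (T_r)` with the stabilization homomorphisms as
transition maps) is perfect: `⁅⁅G,G⁆,⁅G,G⁆⁆ = ⁅G,G⁆`. -/
theorem commutator_stable_automorphism_group_perfect
    [HasFiniteCoproducts C] (X : C)
    (c : Cocone (autFunctor X)) (hc : IsColimit c) :
    ⁅commutator ↥c.pt, commutator ↥c.pt⁆ = commutator ↥c.pt := by
  refine commutator_commutator_eq_of_forall_commutatorElement_eq fun g h => ?_
  obtain ⟨n, a, b, rfl, rfl⟩ := exists_ι_app_eq_pair hc g h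
  obtain ⟨j, hj⟩ := exists_monoidHom_apply_block₁_eq X c n
  refine ⟨j (swap₁₂ _), j (swap₂₃ _ * swap₁₂ _), ?_⟩
  rw [← ι_app_succ_stabHom X c n a, ← ι_app_succ_stabHom X c n b, ← hj, ← hj]
  simp only [← map_commutatorElement, commutatorElement_block₁]
end

section
/- Every monoid automorphism of a free monoid sends generators to generators: for every type α and every multiplicative automorphism e of FreeMonoid α, and every a : α, there exists b : α with e (FreeMonoid.of a) = FreeMonoid.of b. (This is the paper's claim that the free monoid on a set has a unique basis, the words of length one.) -/
/-- Every monoid automorphism of a free monoid sends generators to generators: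
the free monoid on a set has a unique basis, the words of length one. -/
theorem mulAut_freeMonoid_maps_of_to_of (α : Type*) (e : MulAut (FreeMonoid α)) (a : α) :
    ∃ b : α, e (FreeMonoid.of a) = FreeMonoid.of b := by
  set w := e (FreeMonoid.of a) with hw
  rw [← FreeMonoid.length_eq_one]
  rcases h : w.toList with _ | ⟨b, l⟩
  · exfalso
    have hw1 : w = 1 := FreeMonoid.toList.injective (by simp [h])
    have : FreeMonoid.of a = 1 := by
      have := congrArg e.symm hw1
      simp only [hw, MulEquiv.symm_apply_apply, map_one, map_mul] at this ⊢; exact this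
    exact FreeMonoid.of_ne_one a this
  rcases l with _ | ⟨c, t⟩
  · have : w = FreeMonoid.of b := FreeMonoid.toList.injective (by simp [h])
    rw [this, FreeMonoid.length_of]
  · exfalso
    have hsplit : w = FreeMonoid.of b * FreeMonoid.ofList (c :: t) := by
      apply FreeMonoid.toList.injective
      rw [h, FreeMonoid.toList_mul, FreeMonoid.toList_of, FreeMonoid.toList_ofList]
      rfl
    have : FreeMonoid.of a = e.symm (FreeMonoid.of b) * e.symm (FreeMonoid.ofList (c :: t)) := by
      have := congrArg e.symm hsplit
      simp only [hw, MulEquiv.symm_apply_apply, map_one, map_mul] at this ⊢; exact this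
    have hlen := congrArg FreeMonoid.length this
    rw [FreeMonoid.length_of, FreeMonoid.length_mul] at hlen
    have h1 : (e.symm (FreeMonoid.of b)).length ≠ 0 := by
      rw [Ne, FreeMonoid.length_eq_zero]
      intro hz
      have h3 := congrArg e hz
      simp only [MulEquiv.apply_symm_apply, map_one] at h3
      exact FreeMonoid.of_ne_one b h3
    have h2 : (e.symm (FreeMonoid.ofList (c :: t))).length ≠ 0 := by
      rw [Ne, FreeMonoid.length_eq_zero]
      intro hz
      have h3 := congrArg e hz
      simp only [MulEquiv.apply_symm_apply, map_one] at h3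
      have h4 : FreeMonoid.toList (FreeMonoid.ofList (c :: t)) = FreeMonoid.toList 1 := by rw [h3]
      simp at h4
    omega
end

section
/- For every type α, the group homomorphism from Equiv.Perm α to MulAut (FreeMonoid α), sending a permutation σ to the automorphism of FreeMonoid α induced by applying σ letterwise (FreeMonoid.map σ), is a group isomorphism; in particular the automorphism group of the free monoid on r generators is isomorphic to the symmetric group Σ(r). (This is the computation of Aut of free monoids in the paper's example on the theory of monoids.) -/
/-- The multiplicative automorphism of the free monoid induced by applying a
permutation `σ` of the generators letterwise. -/
def permMulAutFreeMonoid (α : Type*) (σ : Equiv.Perm α) : MulAut (FreeMonoid α) :=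
  MonoidHom.toMulEquiv (FreeMonoid.map σ) (FreeMonoid.map σ.symm)
    (by ext a; simp) (by ext a; simp)

/-- The group homomorphism `Equiv.Perm α →* MulAut (FreeMonoid α)` sending a
permutation `σ` to the automorphism of `FreeMonoid α` given by applying `σ`
letterwise. -/
def permToFreeMonoidAut (α : Type*) : Equiv.Perm α →* MulAut (FreeMonoid α) :=
  MonoidHom.mk' (permMulAutFreeMonoid α) (by
    intro σ τ
    ext a
    simp [permMulAutFreeMonoid, FreeMonoid.map_comp])

open FreeMonoid in
lemma mulAut_maps_of {α : Type*} (e : MulAut (FreeMonoid α)) (a : α) :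
    ∃ b, e (FreeMonoid.of a) = FreeMonoid.of b := by
  rw [← FreeMonoid.length_eq_one]
  rcases h : (e (of a)).toList with _ | ⟨b, _ | ⟨c, t⟩⟩
  · exfalso
    have : e (of a) = 1 := toList.injective (by simpa using h)
    have := e.injective (this.trans (map_one e).symm)
    have := congrArg FreeMonoid.length this
    simp at this
  · rw [show FreeMonoid.length (e (of a)) = (toList (e (of a))).length from rfl, h]
    rfl
  · exfalso
    have hx : e (of a) = of b * ofList (c :: t) := toList.injective (by simpa using h)
    have h1 : of a = e.symm (of b) * e.symm (ofList (c :: t)) := by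
      rw [← map_mul, ← hx]; simp
    have hlen := congrArg FreeMonoid.length h1
    rw [length_of, length_mul] at hlen
    have hb : 0 < FreeMonoid.length (e.symm (of b)) := by
      refine Nat.pos_of_ne_zero fun h0 => ?_
      have := e.symm.injective ((length_eq_zero.mp h0).trans (map_one e.symm).symm)
      have := congrArg FreeMonoid.length this
      simp at this
    have hc : 0 < FreeMonoid.length (e.symm (ofList (c :: t))) := by
      refine Nat.pos_of_ne_zero fun h0 => ?_
      have h2 := e.symm.injective ((length_eq_zero.mp h0).trans (map_one e.symm).symm)
      have := congrArg FreeMonoid.length h2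
      rw [ofList_cons, length_mul, length_of, length_one] at this
      omega
    omega

/-- The automorphism group of the free monoid on a set is the symmetric group
on that set: the canonical group homomorphism `Equiv.Perm α →* MulAut (FreeMonoid α)`
is a group isomorphism. -/
theorem permToFreeMonoidAut_bijective (α : Type*) :
    Function.Bijective (permToFreeMonoidAut α) := by
  constructor
  · intro σ τ h
    ext a
    have : permMulAutFreeMonoid α σ (FreeMonoid.of a) = permMulAutFreeMonoid α τ (FreeMonoid.of a) := by
      rw [show permMulAutFreeMonoid α σ = permToFreeMonoidAut α σ from rfl,
        show permMulAutFreeMonoid α τ = permToFreeMonoidAut α τ from rfl, h]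
    simpa [permMulAutFreeMonoid, FreeMonoid.of_injective.eq_iff] using this
  · intro e
    choose g hg using mulAut_maps_of e
    choose g' hg' using mulAut_maps_of e.symm
    have hgg' : ∀ a, g' (g a) = a := by
      intro a
      have := hg' (g a)
      rw [← hg a] at this
      simp at this
      exact (FreeMonoid.of_injective this).symm
    have hg'g : ∀ a, g (g' a) = a := by
      intro a
      have := hg (g' a)
      rw [← hg' a] at this
      simp at this
      exact (FreeMonoid.of_injective this).symm
    refine ⟨⟨g, g', fun a => hgg' a, fun a => hg'g a⟩, ?_⟩
    ext x
    have : (permToFreeMonoidAut α ⟨g, g', fun a => hgg' a, fun a => hg'g a⟩).toMonoidHom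
        = e.toMonoidHom := by
      apply FreeMonoid.hom_eq
      intro a
      simp [permToFreeMonoidAut, permMulAutFreeMonoid, hg a]
    exact DFunLike.congr_fun this x
end

section
/- For every type α, the group homomorphism from Equiv.Perm α to MulAut (FreeMagma α), sending a permutation σ to the automorphism of FreeMagma α induced by applying σ to generators (FreeMagma.map σ), is a group isomorphism; in particular the automorphism group of the free magma on r generators is isomorphic to the symmetric group Σ(r). (This is the paper's claim that for the free theory generated by one binary operation, the free model on a set has a unique basis, so its automorphism groups are symmetric groups.) -/
/-- The multiplicative automorphism of the free magma induced by applying a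
permutation `σ` to the generators. -/
def permMulAutFreeMagma (α : Type*) (σ : Equiv.Perm α) : MulAut (FreeMagma α) :=
  MulHom.toMulEquiv (FreeMagma.map σ) (FreeMagma.map σ.symm)
    (by ext a; simp) (by ext a; simp)

/-- The group homomorphism `Equiv.Perm α →* MulAut (FreeMagma α)` sending a
permutation `σ` to the automorphism of `FreeMagma α` induced by applying `σ`
to the generators. -/
def permToFreeMagmaAut (α : Type*) : Equiv.Perm α →* MulAut (FreeMagma α) :=
  MonoidHom.mk' (permMulAutFreeMagma α) (by
    intro σ τ
    ext a
    simp only [permMulAutFreeMagma, MulAut.mul_apply, MulHom.toMulEquiv_apply]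
    induction a with
    | ih1 a => simp
    | ih2 x y h1 h2 =>
        simp only [Equiv.Perm.coe_mul] at h1 h2
        simp [map_mul, h1, h2])

namespace FreeMagma

variable {α β : Type*}

theorem of_injective : Function.Injective (of : α → FreeMagma α) :=
  fun _ _ h => by injection h

theorem of_ne_mul (a : α) (x y : FreeMagma α) : of a ≠ x * y :=
  nofun

/-- A multiplicative equivalence of free magmas sends generators to generators, since the
generators are exactly the elements that are not products. -/
theorem exists_mulEquiv_apply_of (f : FreeMagma α ≃* FreeMagma β) (a : α) :
    ∃ b, f (of a) = of b := by
  cases h : f (of a) with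
  | of b => exact ⟨b, rfl⟩
  | mul x y =>
    refine absurd ?_ (of_ne_mul a (f.symm x) (f.symm y))
    rw [← map_mul, ← mul_eq, ← h, MulEquiv.symm_apply_apply]

noncomputable def equivOfMulEquiv (f : FreeMagma α ≃* FreeMagma β) : α ≃ β where
  toFun a := (exists_mulEquiv_apply_of f a).choose
  invFun b := (exists_mulEquiv_apply_of f.symm b).choose
  left_inv a := of_injective <| by
    rw [← (exists_mulEquiv_apply_of f.symm _).choose_spec,
      ← (exists_mulEquiv_apply_of f a).choose_spec, MulEquiv.symm_apply_apply]
  right_inv b := of_injective <| by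
    rw [← (exists_mulEquiv_apply_of f _).choose_spec,
      ← (exists_mulEquiv_apply_of f.symm b).choose_spec, MulEquiv.apply_symm_apply]

theorem of_equivOfMulEquiv (f : FreeMagma α ≃* FreeMagma β) (a : α) :
    of (equivOfMulEquiv f a) = f (of a) :=
  (exists_mulEquiv_apply_of f a).choose_spec.symm

theorem map_equivOfMulEquiv (f : FreeMagma α ≃* FreeMagma β) :
    map (equivOfMulEquiv f) = f.toMulHom :=
  hom_ext <| funext <| of_equivOfMulEquiv f

end FreeMagma

theorem permToFreeMagmaAut_apply_of {α : Type*} (σ : Equiv.Perm α) (a : α) :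
    permToFreeMagmaAut α σ (FreeMagma.of a) = FreeMagma.of (σ a) :=
  rfl

/-- The automorphism group of the free magma on a set is the symmetric group
on that set: the canonical group homomorphism `Equiv.Perm α →* MulAut (FreeMagma α)`
is a group isomorphism. -/
theorem permToFreeMagmaAut_bijective (α : Type*) :
    Function.Bijective (permToFreeMagmaAut α) := by
  refine ⟨fun σ τ h => Equiv.ext fun a => FreeMagma.of_injective ?_, fun f => ?_⟩
  · rw [← permToFreeMagmaAut_apply_of, ← permToFreeMagmaAut_apply_of, h]
  · exact ⟨FreeMagma.equivOfMulEquiv f,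
      MulEquiv.ext fun x => DFunLike.congr_fun (FreeMagma.map_equivOfMulEquiv f) x⟩
end

section
/- For every integer v ≥ 2, the Karoubi envelope (idempotent completion) of the full subcategory C_v of finite types spanned by the types Fin r → Fin v (r : ℕ) is equivalent to the full subcategory of the category of finite types spanned by the nonempty finite types. (This is the paper's claim that the idempotent completion of the category of free v-valued Post algebras is, up to opposites, the category of nonempty finite sets, independently of v.) -/
open CategoryTheory

/-- The property of a finite type of being (bijective to) a finitely generated
free `v`-valued Post algebra, i.e. of the form `Fin r → Fin v`. -/
def IsPostAlg (v : ℕ) (X : FintypeCat) : Prop :=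
  ∃ r : ℕ, Nonempty (X ≃ (Fin r → Fin v))

/-- `C_v`: the full subcategory of the category of finite types spanned by the
types `Fin r → Fin v`; the category of finitely generated free `v`-valued Post
algebras is its opposite. -/
abbrev PostCat (v : ℕ) := ObjectProperty.FullSubcategory (IsPostAlg v)

/-- The full subcategory of the category of finite types spanned by the
nonempty finite types. -/
abbrev NonemptyFintypeCat := ObjectProperty.FullSubcategory (fun X : FintypeCat => Nonempty X)

open Idempotents

universe u w

/-!
An idempotent `p` of a finite type `X` splits through its type of fixed points, so taking fixed
points identifies the Karoubi envelope of any full subcategory of finite types with the full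
subcategory of retracts of its objects. For `v ≥ 2` the retracts of the types `Fin r → Fin v` are
exactly the nonempty finite types: these types are nonempty, and a nonempty `Z` embeds into
`Fin n → Fin v` for `n = |Z| < v ^ n`, while an embedding of a nonempty type has a left inverse.
-/

namespace FintypeCat

lemma retract_r_apply_i {Z X : FintypeCat.{u}} (h : Retract Z X) (z : Z) : h.r (h.i z) = z :=
  ConcreteCategory.congr_hom h.retract z

noncomputable def retractOfEmbedding {Z X : FintypeCat.{u}} [Nonempty Z] (f : Z ↪ X) :
    Retract Z X where
  i := homMk f
  r := homMk (Function.invFun f)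
  retract := by
    ext z
    exact Function.leftInverse_invFun f.injective z

variable {P : ObjectProperty FintypeCat.{u}}

lemma karoubi_idem_apply (E : Karoubi P.FullSubcategory) (x : E.X.obj) :
    E.p.hom (E.p.hom x) = E.p.hom x :=
  ConcreteCategory.congr_hom (congrArg InducedCategory.Hom.hom E.idem) x

lemma karoubi_p_comp_apply {E E' : Karoubi P.FullSubcategory} (f : E ⟶ E') (x : E.X.obj) :
    f.f.hom (E.p.hom x) = f.f.hom x :=
  ConcreteCategory.congr_hom (congrArg InducedCategory.Hom.hom (Karoubi.p_comp f)) x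

lemma karoubi_comp_p_apply {E E' : Karoubi P.FullSubcategory} (f : E ⟶ E') (x : E.X.obj) :
    E'.p.hom (f.f.hom x) = f.f.hom x :=
  ConcreteCategory.congr_hom (congrArg InducedCategory.Hom.hom (Karoubi.comp_p f)) x

def KaroubiFixedPoints (E : Karoubi P.FullSubcategory) : Type u := {x : E.X.obj // E.p.hom x = x}

instance (E : Karoubi P.FullSubcategory) : Finite (KaroubiFixedPoints E) :=
  Subtype.finite

def toKaroubiFixedPoints (E : Karoubi P.FullSubcategory) (x : E.X.obj) : KaroubiFixedPoints E :=
  ⟨E.p.hom x, karoubi_idem_apply E x⟩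

lemma toKaroubiFixedPoints_val (E : Karoubi P.FullSubcategory) (y : KaroubiFixedPoints E) :
    toKaroubiFixedPoints E y.1 = y :=
  Subtype.ext y.2

lemma toKaroubiFixedPoints_p (E : Karoubi P.FullSubcategory) (x : E.X.obj) :
    toKaroubiFixedPoints E (E.p.hom x) = toKaroubiFixedPoints E x :=
  Subtype.ext (karoubi_idem_apply E x)

variable (P) in
def karoubiFixedPoints : Karoubi P.FullSubcategory ⥤ FintypeCat.{u} where
  obj E := FintypeCat.of (KaroubiFixedPoints E)
  map f := homMk fun x => ⟨f.f.hom x.1, karoubi_comp_p_apply f x.1⟩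
  map_id E := by
    ext x
    exact Subtype.ext x.2
  map_comp f g := rfl

noncomputable def karoubiFixedPointsFullyFaithful : (karoubiFixedPoints P).FullyFaithful where
  preimage {E E'} φ :=
    ⟨ObjectProperty.homMk
      (homMk fun x => (φ (toKaroubiFixedPoints E x) : KaroubiFixedPoints E').1), by
      ext x
      exact (φ _ : KaroubiFixedPoints E').2.trans
        (congrArg (fun y => (φ y : KaroubiFixedPoints E').1) (toKaroubiFixedPoints_p E x))⟩
  map_preimage {E E'} φ := by
    ext x
    exact congrArg φ (toKaroubiFixedPoints_val E x)
  preimage_map f := by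
    ext x
    exact karoubi_p_comp_apply f x

instance : (karoubiFixedPoints P).Full := karoubiFixedPointsFullyFaithful.full

instance : (karoubiFixedPoints P).Faithful := karoubiFixedPointsFullyFaithful.faithful

def karoubiFixedPointsRetract (E : Karoubi P.FullSubcategory) :
    Retract ((karoubiFixedPoints P).obj E) E.X.obj where
  i := homMk Subtype.val
  r := homMk (toKaroubiFixedPoints E)
  retract := by
    ext y
    exact toKaroubiFixedPoints_val E y

def karoubiOfRetract {Z : FintypeCat.{u}} {X : P.FullSubcategory} (h : Retract Z X.obj) :
    Karoubi P.FullSubcategory where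
  X := X
  p := ObjectProperty.homMk (h.r ≫ h.i)
  idem := by
    ext x : 2
    exact congrArg h.i (retract_r_apply_i h (h.r x))

noncomputable def karoubiFixedPointsObjOfRetractIso {Z : FintypeCat.{u}} {X : P.FullSubcategory}
    (h : Retract Z X.obj) : (karoubiFixedPoints P).obj (karoubiOfRetract h) ≅ Z :=
  equivEquivIso
    { toFun y := h.r y.1
      invFun z := ⟨h.i z, congrArg h.i (retract_r_apply_i h z)⟩
      left_inv y := Subtype.ext y.2
      right_inv := retract_r_apply_i h }

theorem karoubiFixedPoints_essImage :
    (karoubiFixedPoints P).essImage = fun Z => ∃ X, P X ∧ Nonempty (Retract Z X) := by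
  ext Z
  constructor
  · rintro ⟨E, ⟨e⟩⟩
    exact ⟨E.X.obj, E.X.property, ⟨(Retract.ofIso e.symm).trans (karoubiFixedPointsRetract E)⟩⟩
  · rintro ⟨X, hX, ⟨h⟩⟩
    exact ⟨_, ⟨karoubiFixedPointsObjOfRetractIso (X := ⟨X, hX⟩) h⟩⟩

end FintypeCat

namespace IsPostAlg

variable {v : ℕ}

lemma nonempty (hv : 0 < v) {X : FintypeCat.{u}} (hX : IsPostAlg v X) : Nonempty X := by
  obtain ⟨r, ⟨e⟩⟩ := hX
  exact ⟨e.symm fun _ => ⟨0, hv⟩⟩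

lemma exists_retract (hv : 2 ≤ v) (Z : FintypeCat.{u}) [Nonempty Z] :
    ∃ X, IsPostAlg v X ∧ Nonempty (Retract Z X) := by
  set n := Nat.card Z
  have hcard : Fintype.card (Fin n) ≤ Fintype.card (Fin n → Fin v) := by
    simp only [Fintype.card_fun, Fintype.card_fin]
    exact Nat.lt_two_pow_self.le.trans (Nat.pow_le_pow_left hv n)
  obtain ⟨f⟩ := Function.Embedding.nonempty_of_card_le hcard
  let g : Z ↪ ULift.{u} (Fin n → Fin v) :=
    (Finite.equivFin Z).toEmbedding.trans (f.trans Equiv.ulift.symm.toEmbedding)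
  exact ⟨FintypeCat.of _, ⟨n, ⟨Equiv.ulift⟩⟩, ⟨FintypeCat.retractOfEmbedding g⟩⟩

theorem karoubiFixedPoints_essImage (hv : 2 ≤ v) :
    (FintypeCat.karoubiFixedPoints.{u} (IsPostAlg v)).essImage =
      fun Z : FintypeCat.{u} => Nonempty Z := by
  rw [FintypeCat.karoubiFixedPoints_essImage]
  ext Z
  exact ⟨fun ⟨_, hX, ⟨h⟩⟩ => (hX.nonempty (by omega)).map h.r, fun _ => exists_retract hv Z⟩

end IsPostAlg

instance : ObjectProperty.IsClosedUnderIsomorphisms (fun X : FintypeCat.{u} => Nonempty X) where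
  of_iso e := fun ⟨x⟩ => ⟨e.hom x⟩

noncomputable def NonemptyFintypeCat.uSwitchEquivalence :
    NonemptyFintypeCat.{u} ≌ NonemptyFintypeCat.{w} :=
  FintypeCat.uSwitchEquivalence.congrFullSubcategory <| by
    ext X
    exact (FintypeCat.uSwitchEquiv X).nonempty_congr

/-- For every integer `v ≥ 2`, the Karoubi envelope (idempotent completion) of
the category `C_v` of finitely generated free `v`-valued Post algebras is
equivalent to the category of nonempty finite types. -/
theorem karoubi_post_equiv_nonempty_fintype (v : ℕ) (hv : 2 ≤ v) :
    Nonempty (Idempotents.Karoubi (PostCat v) ≌ NonemptyFintypeCat) :=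
  ⟨(FintypeCat.karoubiFixedPoints (IsPostAlg v)).toEssImage.asEquivalence.trans <|
    (ObjectProperty.fullSubcategoryCongr (IsPostAlg.karoubiFixedPoints_essImage hv)).trans
      NonemptyFintypeCat.uSwitchEquivalence⟩
end
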